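/- arXiv:2505.15432 — 3 statements merged into one kernel-verified Lean document; each statement's English description precedes it below -/
import Mathlib

section
/- Let ℓ = ℓ1 ℓ2 be a factorization of a Lyndon word ℓ with ℓ1 and ℓ2 both Lyndon. Define s_0 = ℓ2, p_0 = ℓ1, and, as long as |p_i| > 1, s_{i+1} = p_i^r s_i and p_{i+1} = p_i^l (costandard factorizations). Let j be the index with s_j = ℓ^r, the longest proper Lyndon suffix of ℓ. Then every s_i with 0 ≤ i ≤ j is a Lyndon word. -/
/- Words over a linearly ordered alphabet `I` are lists, compared by the
lexicographic order of Lean's `LinearOrder (List I)` instance, in which a word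
is smaller than any word of which it is a proper prefix. -/

variable {I : Type*} [LinearOrder I]

/-- A nonempty word is *Lyndon* if it is lexicographically smaller than
every proper nonempty suffix of itself. -/
def IsLyndon (w : List I) : Prop :=
  w ≠ [] ∧ ∀ i, 0 < i → i < w.length → w < w.drop i

/-- `r` is the longest proper suffix of `l` that is Lyndon
(the right factor `l^r` of the costandard factorization). -/
def LongestLyndonSuffix (l r : List I) : Prop :=
  r <:+ l ∧ r.length < l.length ∧ IsLyndon r ∧
    ∀ r', r' <:+ l → r'.length < l.length → IsLyndon r' → r'.length ≤ r.length

/-- `p` is the longest proper prefix of `l` that is Lyndon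
(the left factor `l^{ls}` of the standard factorization). -/
def LongestLyndonPrefix (l p : List I) : Prop :=
  p <+: l ∧ p.length < l.length ∧ IsLyndon p ∧
    ∀ p', p' <+: l → p'.length < l.length → IsLyndon p' → p'.length ≤ p.length

/-- `fs` is the canonical factorization of `w`: a nonempty, lexicographically
nonincreasing list of Lyndon words whose concatenation is `w`. -/
def IsCanonicalFactorization (w : List I) (fs : List (List I)) : Prop :=
  w = fs.flatten ∧ fs ≠ [] ∧ (∀ f ∈ fs, IsLyndon f) ∧ fs.Chain' (· ≥ ·)

/-
The concatenation of Lyndon words `u < v` is Lyndon, so it suffices to show `p_i^r < s_i` at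
each step. Since `ℓ = p_i s_i`, the word `p_i^r s_i` is a suffix of `ℓ` no longer than `ℓ^r`,
hence a suffix of `ℓ^r`. The longest proper Lyndon suffix of a word is its lexicographically
least nonempty proper suffix, so `p_i^r` is at most the suffix of `p_i` that begins where
`ℓ^r` does, and `ℓ^r ≤ p_i^r s_i`; together these force `p_i^r` to be a proper prefix of `ℓ^r`,
whence `p_i^r < ℓ^r ≤ s_i`.
-/

theorem List.append_lt_append_of_lt_of_not_prefix {α : Type*} [LT α] {u v : List α} (h : u < v)
    (hpre : ¬ u <+: v) (a b : List α) : u ++ a < v ++ b := by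
  induction (h : List.Lex (· < ·) u v) with
  | nil => exact absurd (List.nil_prefix) hpre
  | rel hxy => exact List.Lex.rel hxy
  | cons _ ih => exact List.Lex.cons (ih fun h => hpre (List.prefix_cons_inj _ |>.2 h))

theorem List.IsPrefix.lt_of_length_lt {α : Type*} [LT α] {u v : List α} (h : u <+: v)
    (hlen : u.length < v.length) : u < v := by
  obtain ⟨_ | ⟨a, t⟩, rfl⟩ := h
  · simp at hlen
  · simpa using List.append_left_lt (l₁ := u) (List.nil_lt_cons a t)

theorem LongestLyndonSuffix.isLyndon {w r : List I} (hr : LongestLyndonSuffix w r) : IsLyndon r :=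
  hr.2.2.1

theorem IsLyndon.le_of_isSuffix {r t : List I} (hr : IsLyndon r) (ht : t <:+ r) (hne : t ≠ []) :
    r ≤ t := by
  obtain ⟨d, rfl⟩ := ht
  rcases eq_or_ne d [] with rfl | hd
  · rfl
  · have hlt := hr.2 d.length (List.length_pos_iff.2 hd)
      (by simpa using List.length_pos_iff.2 hne)
    simpa using hlt.le

theorem IsLyndon.append {u v : List I} (hu : IsLyndon u) (hv : IsLyndon v) (huv : u < v) :
    IsLyndon (u ++ v) := by
  have append_lt : u ++ v < v := by
    by_cases hpre : u <+: v
    · obtain ⟨t, rfl⟩ := hpre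
      have ht : t ≠ [] := by rintro rfl; simp at huv
      have := hv.2 u.length (List.length_pos_iff.2 hu.1) (by simpa using List.length_pos_iff.2 ht)
      exact List.append_left_lt (by simpa using this)
    · simpa using List.append_lt_append_of_lt_of_not_prefix huv hpre v []
  refine ⟨by simp [hu.1], fun i hi0 hi => ?_⟩
  rcases lt_or_ge i u.length with hiu | hiu
  · rw [List.drop_append_of_le_length hiu.le]
    refine List.append_lt_append_of_lt_of_not_prefix (hu.2 i hi0 hiu) (fun h => ?_) v v
    have := h.length_le
    simp only [List.length_drop] at this
    omega
  · rw [List.drop_append, List.drop_eq_nil_of_le hiu, List.nil_append]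
    rw [List.length_append] at hi
    exact append_lt.trans_le <|
      hv.le_of_isSuffix (List.drop_suffix _ _) (by rw [Ne, List.drop_eq_nil_iff]; omega)

theorem LongestLyndonSuffix.le_of_isSuffix {w r t : List I} (hr : LongestLyndonSuffix w r)
    (ht : t <:+ w) (hne : t ≠ []) (hlt : t.length < w.length) : r ≤ t := by
  by_cases hle : t.length ≤ r.length
  · exact hr.isLyndon.le_of_isSuffix (List.suffix_of_suffix_length_le ht hr.1 hle) hne
  · have hnot : ¬ IsLyndon t := fun hl => hle (hr.2.2.2 t ht hlt hl)
    obtain ⟨i, hi0, hi, hdrop⟩ : ∃ i, 0 < i ∧ i < t.length ∧ t.drop i ≤ t := by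
      simpa [IsLyndon, hne] using hnot
    calc r ≤ t.drop i :=
          hr.le_of_isSuffix ((t.drop_suffix i).trans ht) (by rw [Ne, List.drop_eq_nil_iff]; omega)
            (by rw [List.length_drop]; omega)
      _ ≤ t := hdrop
termination_by t.length
decreasing_by rw [List.length_drop]; omega

theorem LongestLyndonSuffix.lt_of_append {p s pr r : List I} (hpr : LongestLyndonSuffix p pr)
    (hr : LongestLyndonSuffix (p ++ s) r) (hs : s ≠ [])
    (hlen : pr.length + s.length ≤ r.length) : pr < s := by
  have hx : pr ++ s <:+ p ++ s := List.suffix_append_self_iff.2 hpr.1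
  obtain ⟨c, hc⟩ : pr ++ s <:+ r :=
    List.suffix_of_suffix_length_le hx hr.1 (by simpa using hlen)
  have hrlen := hr.2.1
  have hprlen := hpr.2.1
  have hspos := List.length_pos_iff.2 hs
  simp only [← hc, List.length_append] at hrlen
  have hpr_le : pr ≤ c ++ pr :=
    hpr.le_of_isSuffix (List.suffix_append_self_iff.1 (by rw [List.append_assoc, hc]; exact hr.1))
      (by simp [hpr.isLyndon.1]) (by simp only [List.length_append]; omega)
  have hr_le : r ≤ pr ++ s :=
    hr.le_of_isSuffix hx (by simp [hs]) (by simp only [List.length_append]; omega)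
  have hcpr : c ++ pr <+: r := ⟨s, by rw [← hc, List.append_assoc]⟩
  have hpre : pr <+: r := by
    by_contra hnot
    have hlt : pr < c ++ pr := lt_of_le_of_ne hpr_le fun h => hnot (h ▸ hcpr)
    have := List.append_lt_append_of_lt_of_not_prefix hlt (fun h => hnot (h.trans hcpr)) s s
    rw [List.append_assoc, hc] at this
    exact absurd hr_le (not_le.2 this)
  calc pr < r := hpre.lt_of_length_lt (by simp only [← hc, List.length_append]; omega)
    _ ≤ s :=
      hr.le_of_isSuffix (List.suffix_append p s) hs (by simp only [List.length_append]; omega)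

theorem costandard_seq_lyndon_general (ℓ ℓ1 ℓ2 : List I)
    (h2 : IsLyndon ℓ2) (hsplit : ℓ = ℓ1 ++ ℓ2)
    (s p : ℕ → List I) (hs0 : s 0 = ℓ2) (hp0 : p 0 = ℓ1)
    (hstep : ∀ i, 1 < (p i).length →
      ∃ pl pr : List I, LongestLyndonSuffix (p i) pr ∧ p i = pl ++ pr ∧
        s (i + 1) = pr ++ s i ∧ p (i + 1) = pl)
    (r : List I) (hr : LongestLyndonSuffix ℓ r)
    (j : ℕ) (hjrange : ∀ i < j, 1 < (p i).length) (hj : s j = r) :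
    ∀ i ≤ j, IsLyndon (s i) := by
  have hfactor : ∀ i ≤ j, p i ++ s i = ℓ := by
    intro i
    induction i with
    | zero => simp [hp0, hs0, hsplit]
    | succ i ih =>
      intro hi
      obtain ⟨pl, pr, -, hpe, hse, hple⟩ := hstep i (hjrange i (by omega))
      rw [hple, hse, ← List.append_assoc, ← hpe, ih (by omega)]
  have hsuffix : ∀ i ≤ j, s i <:+ r := fun i hi => by
    induction hi using Nat.decreasingInduction with
    | self => rw [hj]
    | of_succ k hk ih =>
      obtain ⟨-, pr, -, -, hse, -⟩ := hstep k (hjrange k hk)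
      exact (hse ▸ List.suffix_append pr (s k)).trans ih
  intro i
  induction i with
  | zero => simpa [hs0] using h2
  | succ i ih =>
    intro hi
    obtain ⟨-, pr, hpr, -, hse, -⟩ := hstep i (hjrange i (by omega))
    have hlen := (hsuffix (i + 1) hi).length_le
    rw [hse, List.length_append] at hlen
    have hs := ih (by omega)
    rw [hse]
    exact hpr.isLyndon.append hs <|
      hpr.lt_of_append (hfactor i (by omega) ▸ hr) hs.1 hlen

/-- For any factorization `ℓ = ℓ1 ℓ2` of a Lyndon word into two Lyndon words, iterating
`s_{i+1} = p_i^r s_i`, `p_{i+1} = p_i^l` (costandard factorizations) from `s_0 = ℓ2`,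
`p_0 = ℓ1`, if `s_j = ℓ^r`, then every `s_i` with `0 ≤ i ≤ j` is Lyndon. -/
theorem costandard_seq_lyndon (ℓ ℓ1 ℓ2 : List I)
    (hℓ : IsLyndon ℓ) (h1 : IsLyndon ℓ1) (h2 : IsLyndon ℓ2) (hsplit : ℓ = ℓ1 ++ ℓ2)
    (s p : ℕ → List I) (hs0 : s 0 = ℓ2) (hp0 : p 0 = ℓ1)
    (hstep : ∀ i, 1 < (p i).length →
      ∃ pl pr : List I, LongestLyndonSuffix (p i) pr ∧ p i = pl ++ pr ∧
        s (i + 1) = pr ++ s i ∧ p (i + 1) = pl)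
    (r : List I) (hr : LongestLyndonSuffix ℓ r)
    (j : ℕ) (hjrange : ∀ i < j, 1 < (p i).length) (hj : s j = r) :
    ∀ i ≤ j, IsLyndon (s i) :=
  costandard_seq_lyndon_general ℓ ℓ1 ℓ2 h2 hsplit s p hs0 hp0 hstep r hr j hjrange hj
end

section
/- Let ℓ = ℓ1 ℓ2 be a factorization of a Lyndon word ℓ with ℓ1 and ℓ2 both Lyndon. Define u_1 = ℓ1, v_1 = ℓ2, and, as long as |v_i| > 1, set u_{i+1} = u_i v_i^{ls} and v_{i+1} = v_i^{rs} (standard factorizations of v_i). Let n be the smallest index such that either v_n^{ls} ≤ u_n or |v_n| = 1. Then every word u_1, u_2, ..., u_n is Lyndon. -/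
/- Words over a linearly ordered alphabet `I` are lists, compared by the
lexicographic order of Lean's `LinearOrder (List I)` instance, in which a word
is smaller than any word of which it is a proper prefix. -/

variable {I : Type*} [LinearOrder I]

private lemma list_lt_iff (l l' : List I) : l < l' ↔ List.Lex (· < ·) l l' := Iff.rfl

private lemma lex_nil_lt {l : List I} (h : l ≠ []) : ([] : List I) < l := by
  rw [list_lt_iff]
  cases l with
  | nil => exact absurd rfl h
  | cons a t => exact List.Lex.nil

private lemma append_lt_append_left {b c : List I} (a : List I) (h : b < c) :
    a ++ b < a ++ c := by
  rw [list_lt_iff] at h ⊢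
  induction a with
  | nil => exact h
  | cons x xs ih => exact List.Lex.cons ih

private lemma lex_append_of_not_prefix : ∀ {w w' : List I}, List.Lex (· < ·) w w' →
    ¬ w <+: w' → ∀ x y : List I, List.Lex (· < ·) (w ++ x) (w' ++ y)
  | _, _, List.Lex.nil, hp, _, _ => absurd List.nil_prefix hp
  | _, _, @List.Lex.cons _ _ a _ _ h, hp, x, y =>
      List.Lex.cons (lex_append_of_not_prefix h
        (fun hpre => hp (List.cons_prefix_cons.mpr ⟨rfl, hpre⟩)) x y)
  | _, _, List.Lex.rel h, _, _, _ => List.Lex.rel h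

private lemma lt_append_of_lt_of_not_prefix {w w' : List I} (h : w < w')
    (hp : ¬ w <+: w') (x y : List I) : w ++ x < w' ++ y :=
  lex_append_of_not_prefix h hp x y

private lemma lyndon_append {a b : List I} (ha : IsLyndon a) (hb : IsLyndon b)
    (hab : a < b) : IsLyndon (a ++ b) := by
  obtain ⟨hane, has⟩ := ha
  obtain ⟨hbne, hbs⟩ := hb
  have hal : 0 < a.length := List.length_pos_iff.mpr hane
  have hbl : 0 < b.length := List.length_pos_iff.mpr hbne
  have key : a ++ b < b := by
    by_cases hp : a <+: b
    · obtain ⟨t, ht⟩ := hp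
      have htne : t ≠ [] := by
        rintro rfl
        simp at ht
        exact absurd ht (ne_of_lt hab)
      have htd : t = b.drop a.length := by rw [← ht]; simp
      have hvt : b < t := by
        rw [htd]
        refine hbs a.length hal ?_
        rw [← ht]
        have := List.length_pos_iff.mpr htne
        simp only [List.length_append]
        omega
      calc a ++ b < a ++ t := append_lt_append_left a hvt
        _ = b := ht
    · have := lt_append_of_lt_of_not_prefix hab hp b []
      simpa using this
  refine ⟨by simp [hane], fun i hi hilen => ?_⟩
  rw [List.drop_append]
  rcases lt_trichotomy i a.length with h | h | h
  · have h0 : i - a.length = 0 := by omega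
    rw [h0, List.drop_zero]
    have hlt : a < a.drop i := has i hi h
    have hnp : ¬ a <+: a.drop i := fun hpre => by
      have := hpre.length_le
      rw [List.length_drop] at this
      omega
    exact lt_append_of_lt_of_not_prefix hlt hnp b b
  · rw [h]
    simp only [List.drop_length, Nat.sub_self, List.drop_zero, List.nil_append]
    exact key
  · have h0 : a.drop i = [] := List.drop_eq_nil_of_le (le_of_lt h)
    rw [h0, List.nil_append]
    refine lt_trans key (hbs (i - a.length) (by omega) ?_)
    rw [List.length_append] at hilen
    omega


/-- For a factorization `ℓ = ℓ1 ℓ2` of a Lyndon word into two Lyndon words, iterating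
`u_{i+1} = u_i v_i^{ls}`, `v_{i+1} = v_i^{rs}` (standard factorizations) from
`u_1 = ℓ1`, `v_1 = ℓ2`, up to the smallest `n` with `v_n^{ls} ≤ u_n` or `|v_n| = 1`,
every `u_1, …, u_n` is Lyndon. -/
theorem standard_seq_lyndon (ℓ ℓ1 ℓ2 : List I)
    (hℓ : IsLyndon ℓ) (h1 : IsLyndon ℓ1) (h2 : IsLyndon ℓ2) (hsplit : ℓ = ℓ1 ++ ℓ2)
    (u v : ℕ → List I) (hu1 : u 1 = ℓ1) (hv1 : v 1 = ℓ2)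
    (hstep : ∀ i, 1 ≤ i → 1 < (v i).length →
      ∃ vls vrs : List I, LongestLyndonPrefix (v i) vls ∧ v i = vls ++ vrs ∧
        u (i + 1) = u i ++ vls ∧ v (i + 1) = vrs)
    (n : ℕ) (hn1 : 1 ≤ n)
    (hstop : (v n).length = 1 ∨ ∃ w : List I, LongestLyndonPrefix (v n) w ∧ w ≤ u n)
    (hmin : ∀ m, 1 ≤ m → m < n →
      ¬((v m).length = 1 ∨ ∃ w : List I, LongestLyndonPrefix (v m) w ∧ w ≤ u m)) :
    ∀ i, 1 ≤ i → i ≤ n → IsLyndon (u i) := by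
  have main : ∀ i, 1 ≤ i → i ≤ n → IsLyndon (u i) ∧ v i ≠ [] := by
    intro i
    induction i with
    | zero => omega
    | succ j ih =>
      intro h1j h2j
      rcases Nat.lt_or_ge 1 (j + 1) with hlt | hle
      · have hj1 : 1 ≤ j := by omega
        obtain ⟨hlj, hvj⟩ := ih hj1 (by omega)
        have hm := hmin j hj1 (by omega)
        push_neg at hm
        obtain ⟨hlen1, hw⟩ := hm
        have hlen : 1 < (v j).length := by
          have := List.length_pos_iff.mpr hvj
          omega
        obtain ⟨vls, vrs, hLLP, hveq, hueq, hve⟩ := hstep j hj1 hlen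
        have hlenls := hLLP.2.1
        have hlls := hLLP.2.2.1
        have hlt : u j < vls := hw vls hLLP
        constructor
        · rw [hueq]; exact lyndon_append hlj hlls hlt
        · rw [hve]
          intro hnil
          rw [hnil, List.append_nil] at hveq
          rw [← hveq] at hlenls
          omega
      · have hj0 : j = 0 := by omega
        subst hj0
        rw [hu1, hv1]
        exact ⟨h1, h2.1⟩
  exact fun i hi hin => (main i hi hin).1
end

section
/- Let u be a Lyndon word and write u = v w with v Lyndon and w nonempty, and let w = w1 w2 ... wN be the canonical factorization of w (each wi Lyndon, w1 ≥ w2 ≥ ... ≥ wN). Then every partial concatenation v w1, v w1 w2, ..., v w1 w2 ... wN is a Lyndon word. -/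
/- Words over a linearly ordered alphabet `I` are lists, compared by the
lexicographic order of Lean's `LinearOrder (List I)` instance, in which a word
is smaller than any word of which it is a proper prefix. -/

variable {I : Type*} [LinearOrder I]

/-! The first factor `w₁` exceeds `v`: since `v` is a prefix of `u`, the last factor `w_N` is a
proper suffix of the Lyndon word `u`, and the factors decrease, `v ≤ u < w_N ≤ w₁`. The
concatenation of Lyndon words `a < b` is Lyndon, so `v w₁` is Lyndon, and as
`u = (v w₁) w₂ ⋯ w_N` the argument repeats with `v w₁` in place of `v`. -/

theorem List.append_lt_append_of_lt_of_not_prefix_s14 {α : Type*} [LT α] {x y : List α}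
    (hlt : x < y) (hpre : ¬ x <+: y) (s t : List α) : x ++ s < y ++ t := by
  induction x generalizing y with
  | nil => exact absurd y.nil_prefix hpre
  | cons a x ih =>
    cases y with
    | nil => exact absurd hlt (List.not_lt_nil _)
    | cons b y =>
      rcases List.cons_lt_cons_iff.mp hlt with hab | ⟨rfl, hxy⟩
      · exact List.Lex.rel hab
      · exact List.cons_lt_cons_iff.mpr
          (Or.inr ⟨rfl, ih hxy fun h => hpre (List.cons_prefix_cons.mpr ⟨rfl, h⟩)⟩)

namespace IsLyndon

variable {v w a b : List I}

theorem le_drop (h : IsLyndon w) {i : ℕ} (hi : i < w.length) : w ≤ w.drop i := by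
  rcases Nat.eq_zero_or_pos i with rfl | hi0
  · exact le_of_eq List.drop_zero.symm
  · exact le_of_lt (h.2 i hi0 hi)

theorem append_lt_right (h : IsLyndon (a ++ b)) (ha : a ≠ []) (hb : b ≠ []) : a ++ b < b := by
  have := h.2 a.length (List.length_pos_iff.mpr ha)
    (by simp [List.length_pos_iff.mpr hb])
  rwa [List.drop_left] at this

theorem append_lt_of_lt (ha : a ≠ []) (hb : IsLyndon b) (hab : a < b) : a ++ b < b := by
  by_cases hpre : a <+: b
  · obtain ⟨b', rfl⟩ := hpre
    have hb' : b' ≠ [] := by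
      rintro rfl
      simp at hab
    exact List.append_left_lt (hb.append_lt_right ha hb')
  · simpa using List.append_lt_append_of_lt_of_not_prefix_s14 hab hpre b []

theorem append_s14 (ha : IsLyndon a) (hb : IsLyndon b) (hab : a < b) : IsLyndon (a ++ b) := by
  refine ⟨by simp [ha.1], fun i hi0 hi => ?_⟩
  rw [List.drop_append]
  rcases lt_or_ge i a.length with hia | hai
  · have hpre : ¬ a <+: a.drop i := fun h => by
      have := h.length_le
      simp at this
      omega
    simpa using
      List.append_lt_append_of_lt_of_not_prefix_s14 (ha.2 i hi0 hia) hpre b (b.drop (i - a.length))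
  · rw [List.drop_eq_nil_of_le hai, List.nil_append]
    calc a ++ b < b := append_lt_of_lt ha.1 hb hab
      _ ≤ b.drop (i - a.length) := hb.le_drop (by simp at hi; omega)

theorem lt_head_of_isChain {f : List I} {fs : List (List I)}
    (hu : IsLyndon (v ++ (f :: fs).flatten)) (hv : v ≠ [])
    (hfs : ∀ g ∈ f :: fs, g ≠ []) (hch : (f :: fs).IsChain (· ≥ ·)) : v < f := by
  set l := f :: fs
  have hl : l ≠ [] := List.cons_ne_nil f fs
  have hsplit : v ++ l.flatten = (v ++ l.dropLast.flatten) ++ l.getLast hl := by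
    conv_lhs => rw [← List.dropLast_append_getLast hl]
    simp
  have hlast : l.getLast hl ≤ f := by
    rcases List.mem_cons.mp (List.getLast_mem hl) with h | h
    · exact le_of_eq h
    · exact hch.rel_cons h
  -- core's `≤` on lists, used by `List.le_append_left`, is `¬ y < x`
  calc v ≤ v ++ l.flatten := not_lt.mp List.le_append_left
    _ < l.getLast hl := by
      rw [hsplit] at hu ⊢
      exact hu.append_lt_right (by simp [hv]) (hfs _ (List.getLast_mem hl))
    _ ≤ f := hlast

theorem append_flatten_take {fs : List (List I)} (hv : IsLyndon v)
    (hfs : ∀ f ∈ fs, IsLyndon f) (hch : fs.IsChain (· ≥ ·))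
    (hu : IsLyndon (v ++ fs.flatten)) (k : ℕ) : IsLyndon (v ++ (fs.take k).flatten) := by
  induction fs generalizing v k with
  | nil => simpa using hv
  | cons f fs ih =>
    cases k with
    | zero => simpa using hv
    | succ k =>
      have hvf : IsLyndon (v ++ f) :=
        hv.append_s14 (hfs f List.mem_cons_self)
          (hu.lt_head_of_isChain hv.1 (fun g hg => (hfs g hg).1) hch)
      simpa using ih hvf (fun g hg => hfs g (List.mem_cons_of_mem f hg)) hch.tail
        (by simpa using hu) k

end IsLyndon

theorem partial_right_concat_lyndon_general (u v w : List I)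
    (hu : IsLyndon u) (hv : IsLyndon v) (hsplit : u = v ++ w)
    (fs : List (List I)) (hfac : IsCanonicalFactorization w fs) :
    ∀ k, 1 ≤ k → k ≤ fs.length → IsLyndon (v ++ (fs.take k).flatten) := by
  obtain ⟨rfl, -, hfs, hch⟩ := hfac
  subst hsplit
  exact fun k _ _ => hv.append_flatten_take hfs hch hu k

/-- If a Lyndon word `u` splits as `u = v w` with `v` Lyndon and `w` nonempty, and
`w = w1 … wN` is the canonical factorization of `w`, then every partial concatenation
`v w1 … wk` (for `1 ≤ k ≤ N`) is Lyndon. -/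
theorem partial_right_concat_lyndon (u v w : List I)
    (hu : IsLyndon u) (hv : IsLyndon v) (hw : w ≠ []) (hsplit : u = v ++ w)
    (fs : List (List I)) (hfac : IsCanonicalFactorization w fs) :
    ∀ k, 1 ≤ k → k ≤ fs.length → IsLyndon (v ++ (fs.take k).flatten) :=
  partial_right_concat_lyndon_general u v w hu hv hsplit fs hfac
end
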